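/- First difference operator formula (Proposition 4.1, part 1): for every Schwartz function κ : ℝ⁴ → ℂ, every Schwartz function h : ℝ → ℂ, every λ ∈ ℝ \ {0}, μ ∈ ℝ, and u ∈ ℝ, one has (π_{λ,μ}(x₁κ)h)(u) = (i/λ)[(−iλu)(π_{λ,μ}(κ)h)(u) − (π_{λ,μ}(κ)(v ↦ −iλv·h(v)))(u)], i.e. Δ_{x₁}π_{λ,μ}(κ) = (i/λ)(π_{λ,μ}(X₃)π_{λ,μ}(κ) − π_{λ,μ}(κ)π_{λ,μ}(X₃)) with π_{λ,μ}(X₃) the multiplication operator h(v) ↦ −iλv·h(v). -/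

import Mathlib

/-! Writing `x₁ = u - (u - x₁)` splits the integrand of `π_{λ,μ}(x₁κ)h` at `u` into `u` times that
of `π_{λ,μ}(κ)h` minus that of `π_{λ,μ}(κ)(v ↦ v h(v))`. Both pieces are integrable because `κ` is
Schwartz while the phase has modulus one and `h`, `v ↦ v h(v)` are bounded; the constant
`(i/λ)(-iλ) = 1` then turns this identity into the commutator formula. -/

open MeasureTheory Complex

noncomputable section

/-- The group Fourier transform on the Engel group:
`(π_{λ,μ}(κ)h)(u) = ∫_{ℝ⁴} κ(x) exp(i((μ/(2λ))x₂ − λx₄ + λx₃(u−x₁) − (λ/2)x₂(u−x₁)²)) h(u−x₁) dx`. -/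
def piF (lam mu : ℝ) (κ : ℝ × ℝ × ℝ × ℝ → ℂ) (h : ℝ → ℂ) (u : ℝ) : ℂ :=
  ∫ x : ℝ × ℝ × ℝ × ℝ,
    κ x * Complex.exp (Complex.I *
      (((mu / (2 * lam)) * x.2.1 - lam * x.2.2.2 + lam * x.2.2.1 * (u - x.1)
        - (lam / 2) * x.2.1 * (u - x.1) ^ 2 : ℝ) : ℂ)) * h (u - x.1)

open SchwartzMap BoundedContinuousFunction

-- `volume` on a product is not reducibly a product measure, so instance search misses this.
instance : (volume : Measure (ℝ × ℝ × ℝ × ℝ)).IsAddHaarMeasure :=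
  have : (volume : Measure (ℝ × ℝ × ℝ)).IsAddHaarMeasure :=
    inferInstanceAs ((volume : Measure ℝ).prod volume).IsAddHaarMeasure
  inferInstanceAs ((volume : Measure ℝ).prod volume).IsAddHaarMeasure

def engelPhase (lam mu u : ℝ) (x : ℝ × ℝ × ℝ × ℝ) : ℂ :=
  Complex.exp (Complex.I *
    (((mu / (2 * lam)) * x.2.1 - lam * x.2.2.2 + lam * x.2.2.1 * (u - x.1)
      - (lam / 2) * x.2.1 * (u - x.1) ^ 2 : ℝ) : ℂ))

section

variable (lam mu u : ℝ)

theorem piF_eq_integral_engelPhase (κ : ℝ × ℝ × ℝ × ℝ → ℂ) (h : ℝ → ℂ) :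
    piF lam mu κ h u = ∫ x, κ x * engelPhase lam mu u x * h (u - x.1) :=
  rfl

theorem norm_engelPhase (x : ℝ × ℝ × ℝ × ℝ) : ‖engelPhase lam mu u x‖ = 1 := by
  rw [engelPhase, mul_comm]
  exact Complex.norm_exp_ofReal_mul_I _

@[fun_prop]
theorem continuous_engelPhase : Continuous (engelPhase lam mu u) := by
  unfold engelPhase
  fun_prop

theorem integrable_mul_engelPhase_mul (κ : 𝓢(ℝ × ℝ × ℝ × ℝ, ℂ)) (g : ℝ →ᵇ ℂ) :
    Integrable fun x => κ x * engelPhase lam mu u x * g (u - x.1) := by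
  simp_rw [mul_assoc]
  refine κ.integrable.mul_bdd (c := ‖g‖) (by fun_prop) (Filter.Eventually.of_forall fun x => ?_)
  simpa [norm_engelPhase] using g.norm_coe_le_norm (u - x.1)

theorem piF_const_mul (κ : ℝ × ℝ × ℝ × ℝ → ℂ) (h : ℝ → ℂ) (c : ℂ) :
    piF lam mu κ (fun v => c * h v) u = c * piF lam mu κ h u := by
  simp_rw [piF_eq_integral_engelPhase, ← integral_const_mul]
  congr 1 with x
  ring

theorem piF_ofReal_fst_mul (κ : 𝓢(ℝ × ℝ × ℝ × ℝ, ℂ)) (h : 𝓢(ℝ, ℂ)) :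
    piF lam mu (fun x => (x.1 : ℂ) * κ x) h u =
      u * piF lam mu κ h u - piF lam mu κ (fun v => (v : ℂ) * h v) u := by
  set vh : 𝓢(ℝ, ℂ) := smulLeftCLM ℂ (fun v : ℝ => (v : ℂ)) h
  have hvh : ⇑vh = fun v : ℝ => (v : ℂ) * h v :=
    smulLeftCLM_apply (by fun_prop) h
  have hI := integrable_mul_engelPhase_mul lam mu u κ h.toBoundedContinuousFunction
  have hI' := integrable_mul_engelPhase_mul lam mu u κ vh.toBoundedContinuousFunction
  simp only [toBoundedContinuousFunction_apply, hvh] at hI hI'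
  simp_rw [piF_eq_integral_engelPhase, ← integral_const_mul, ← integral_sub (hI.const_mul _) hI']
  congr 1 with x
  push_cast
  ring

end

/-- First difference operator formula (Proposition 4.1, part 1):
`Δ_{x₁}π_{λ,μ}(κ) = (i/λ)(π_{λ,μ}(X₃)π_{λ,μ}(κ) − π_{λ,μ}(κ)π_{λ,μ}(X₃))`, where
`π_{λ,μ}(X₃)` is the multiplication operator `h(v) ↦ −iλv·h(v)` and
`Δ_{x₁}π_{λ,μ}(κ) = π_{λ,μ}(x₁κ)`. -/
theorem engel_difference_operator_x1 :
    ∀ κ : SchwartzMap (ℝ × ℝ × ℝ × ℝ) ℂ, ∀ h : SchwartzMap ℝ ℂ,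
      ∀ lam : ℝ, lam ≠ 0 → ∀ mu u : ℝ,
        piF lam mu (fun x => (x.1 : ℂ) * κ x) h u =
          (Complex.I / (lam : ℂ)) *
            ((-Complex.I * (lam : ℂ) * (u : ℂ)) * piF lam mu κ h u -
              piF lam mu κ (fun v => -Complex.I * (lam : ℂ) * (v : ℂ) * h v) u) := by
  intro κ h lam hlam mu u
  have hlam' : (lam : ℂ) ≠ 0 := by exact_mod_cast hlam
  simp_rw [mul_assoc _ _ (h _), piF_const_mul, piF_ofReal_fst_mul]
  field_simp
  ring_nf
  simp only [Complex.I_sq]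
  ring
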